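/- Under Assumptions 1–3, let p ∈ [1, min(q,r)] and γ ∈ (0,1]. There exists a constant K, independent of the admissible step size Δ and of f, such that |μ(f) − μ^Δ(f)| ≤ K·‖f‖_{p,γ}·|Δ^α|^γ for every f ∈ C_{p,γ} and every admissible Δ, where |Δ^α| := h^{α₁}+τ^{α₂} (convergence of the numerical invariant measure in the weak sense). -/

import Mathlib

open MeasureTheory Filter Set Topology ENNReal
noncomputable section

namespace PaperProb

variable {E Ω : Type*}

/-! ### Test function spaces `C_{p,γ}` -/

section QuasiMetric
variable [NormedAddCommGroup E]

/-- the quasi-metric `d_{p,γ}` -/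
def dQ (p γ : ℝ) (u₁ u₂ : E) : ℝ :=
  min 1 (‖u₁ - u₂‖ ^ γ) * (1 + ‖u₁‖ ^ p + ‖u₂‖ ^ p) ^ ((1 : ℝ) / 2)

def wQuot (p : ℝ) (f : E → ℝ) (u : E) : ℝ :=
  |f u| / (1 + ‖u‖ ^ (p / 2))

def hQuot (p γ : ℝ) (f : E → ℝ) (pr : E × E) : ℝ :=
  |f pr.1 - f pr.2| / dQ p γ pr.1 pr.2

/-- membership in `C_{p,γ}(S;ℝ)` -/
def MemC (S : Set E) (p γ : ℝ) (f : E → ℝ) : Prop :=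
  ContinuousOn f S ∧ BddAbove (wQuot p f '' S) ∧ BddAbove (hQuot p γ f '' (S ×ˢ S))

/-- the norm `‖f‖_{p,γ}` of `C_{p,γ}(S;ℝ)` -/
def CNorm (S : Set E) (p γ : ℝ) (f : E → ℝ) : ℝ :=
  sSup (wQuot p f '' S) + sSup (hQuot p γ f '' (S ×ˢ S))

end QuasiMetric

/-! ### bounded Wasserstein distance `W₂` -/

section Wasserstein
variable [NormedAddCommGroup E] [MeasurableSpace E]

def IsCoupling (ν₁ ν₂ : Measure E) (π : Measure (E × E)) : Prop :=
  IsProbabilityMeasure π ∧ π.map Prod.fst = ν₁ ∧ π.map Prod.snd = ν₂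

def W2 (ν₁ ν₂ : Measure E) : ℝ :=
  (⨅ π : {π : Measure (E × E) // IsCoupling ν₁ ν₂ π},
      ∫ pr : E × E, min 1 (‖pr.1 - pr.2‖ ^ 2) ∂π.1) ^ ((1 : ℝ) / 2)

end Wasserstein

/-- boundedness of a test functional -/
def Bdd {α : Type*} (f : α → ℝ) : Prop := ∃ C, ∀ u, |f u| ≤ C

/-! ### Markov semigroups and invariant measures -/

section Markov
variable [MeasurableSpace Ω]

/-- the semigroup `P_t f (x) = 𝔼[f(X^x_t)]` -/
def Pt (ℙ : Measure Ω) (X : E → ℝ → Ω → E) (t : ℝ) (f : E → ℝ) (x : E) : ℝ :=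
  ∫ ω, f (X x t ω) ∂ℙ

/-- the numerical semigroup `P^Δ_{t_k} f (x) = 𝔼[f(Y^{x,Δ}_{t_k})]` -/
def PD (ℙ : Measure Ω) (Y : ℝ × ℝ → E → ℕ → Ω → E) (Δ : ℝ × ℝ) (k : ℕ)
    (f : E → ℝ) (x : E) : ℝ :=
  ∫ ω, f (Y Δ x k ω) ∂ℙ

/-- invariant probability measure of the continuous-time Markov family -/
def IsInvMeasure [MeasurableSpace E] (ℙ : Measure Ω) (X : E → ℝ → Ω → E)
    (μ : Measure E) : Prop :=
  IsProbabilityMeasure μ ∧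
    ∀ t : ℝ, 0 ≤ t → ∀ f : E → ℝ, Measurable f → Bdd f →
      ∫ x, Pt ℙ X t f x ∂μ = ∫ x, f x ∂μ

/-- invariant probability measure (supported on `S = E^h`) of the numerical chain -/
def IsInvMeasureD [MeasurableSpace E] (ℙ : Measure Ω) (Y : ℝ × ℝ → E → ℕ → Ω → E)
    (S : Set E) (Δ : ℝ × ℝ) (ν : Measure E) : Prop :=
  IsProbabilityMeasure ν ∧ ν Sᶜ = 0 ∧
    ∀ k : ℕ, ∀ f : E → ℝ, Measurable f → Bdd f →
      ∫ x, PD ℙ Y Δ k f x ∂ν = ∫ x, f x ∂ν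

end Markov

/-- admissible step sizes `Δ = (h,τ)` -/
def Adm (ht τt : ℝ) (Δ : ℝ × ℝ) : Prop :=
  Δ.1 ∈ Set.Icc (0 : ℝ) ht ∧ Δ.2 ∈ Set.Ioc (0 : ℝ) τt

/-! ### Assumptions of the paper -/

/-- Assumption 1: time-homogeneous Markov family with moment bound and contraction. -/
structure Assumption1 [NormedAddCommGroup E] [NormedSpace ℝ E] [MeasurableSpace E]
    [BorelSpace E] {mΩ : MeasurableSpace Ω} (ℙ : Measure Ω) (ℱ : Filtration ℝ mΩ)
    (X : E → ℝ → Ω → E) (r rt γ₁ β L₁ L₂ : ℝ) (ρ : ℝ → ℝ) : Prop where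
  prob : IsProbabilityMeasure ℙ
  init : ∀ x ω, X x 0 ω = x
  jmeas : ∀ t : ℝ, Measurable fun p : E × Ω => X p.1 t p.2
  pathMeas : ∀ x ω, Measurable fun t : ℝ => X x t ω
  adapted : ∀ x, ∀ t : ℝ, 0 ≤ t → Measurable[ℱ t] (X x t)
  markov : ∀ f : E → ℝ, Measurable f → Bdd f → ∀ x, ∀ s t : ℝ, 0 ≤ s → 0 ≤ t →
    (ℙ[(fun ω => f (X x (s + t) ω))|ℱ s]) =ᵐ[ℙ] fun ω => ∫ ω', f (X (X x s ω) t ω') ∂ℙ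
  hr : 2 ≤ r
  hrt : 1 ≤ rt
  hL₁ : 0 < L₁
  moment : ∀ x, ∀ t : ℝ, 0 ≤ t →
    ∫⁻ ω, (‖X x t ω‖₊ : ℝ≥0∞) ^ r ∂ℙ ≤ ENNReal.ofReal (L₁ * (1 + ‖x‖ ^ (rt * r)))
  hγ₁ : γ₁ ∈ Set.Ioc (0 : ℝ) 1
  hβ : β ∈ Set.Icc (0 : ℝ) (r - 1)
  hL₂ : 0 < L₂
  ρ_cont : Continuous ρ
  ρ_nonneg : ∀ t, 0 ≤ ρ t
  ρ_int : IntegrableOn (fun t => ρ t ^ γ₁) (Set.Ici (0 : ℝ))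
  contract : ∀ x y, ∀ t : ℝ, 0 ≤ t →
    (∫⁻ ω, (‖X x t ω - X y t ω‖₊ : ℝ≥0∞) ^ (2 : ℝ) ∂ℙ) ^ ((1 : ℝ) / 2) ≤
      ENNReal.ofReal (L₂ * ‖x - y‖ * (1 + ‖x‖ ^ β + ‖y‖ ^ β) * ρ t)

/-- Assumption 2: numerical discretization as a time-homogeneous Markov chain with
uniform moment bound and strong-mixing-type contraction. -/
structure Assumption2 [NormedAddCommGroup E] [NormedSpace ℝ E] [MeasurableSpace E]
    [BorelSpace E] {mΩ : MeasurableSpace Ω} (ℙ : Measure Ω) (ℱ : Filtration ℝ mΩ)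
    (Eh : ℝ → Set E) (Y : ℝ × ℝ → E → ℕ → Ω → E)
    (ht τt q qt γ₂ κ L₃ L₄ : ℝ) (ρD : ℝ × ℝ → ℝ → ℝ) : Prop where
  prob : IsProbabilityMeasure ℙ
  hht : ht ∈ Set.Icc (0 : ℝ) 1
  hτt : τt ∈ Set.Ioc (0 : ℝ) 1
  hE0 : Eh 0 = Set.univ
  init : ∀ Δ, Adm ht τt Δ → ∀ x ∈ Eh Δ.1, ∀ ω, Y Δ x 0 ω = x
  stateMem : ∀ Δ, Adm ht τt Δ → ∀ x ∈ Eh Δ.1, ∀ (k : ℕ) ω, Y Δ x k ω ∈ Eh Δ.1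
  jmeas : ∀ Δ, ∀ k : ℕ, Measurable fun p : E × Ω => Y Δ p.1 k p.2
  adapted : ∀ Δ, Adm ht τt Δ → ∀ x ∈ Eh Δ.1, ∀ k : ℕ,
    Measurable[ℱ ((k : ℝ) * Δ.2)] (Y Δ x k)
  markov : ∀ Δ, Adm ht τt Δ → ∀ x ∈ Eh Δ.1, ∀ f : E → ℝ, Measurable f → Bdd f →
    ∀ j k : ℕ,
      (ℙ[(fun ω => f (Y Δ x (j + k) ω))|ℱ ((j : ℝ) * Δ.2)]) =ᵐ[ℙ]
        fun ω => ∫ ω', f (Y Δ (Y Δ x j ω) k ω') ∂ℙ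
  hq : 2 ≤ q
  hqt : 1 ≤ qt
  hL₃ : 0 < L₃
  moment : ∀ Δ, Adm ht τt Δ → ∀ x ∈ Eh Δ.1, ∀ k : ℕ,
    ∫⁻ ω, (‖Y Δ x k ω‖₊ : ℝ≥0∞) ^ q ∂ℙ ≤ ENNReal.ofReal (L₃ * (1 + ‖x‖ ^ (qt * q)))
  hγ₂ : γ₂ ∈ Set.Ioc (0 : ℝ) 1
  hκ : κ ∈ Set.Icc (0 : ℝ) (q - 1)
  hL₄ : 0 < L₄
  ρD_nonneg : ∀ Δ t, 0 ≤ ρD Δ t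
  ρD_sum : ∃ B : ℝ, ∀ Δ, Adm ht τt Δ →
    Summable (fun k : ℕ => ρD Δ ((k : ℝ) * Δ.2) ^ γ₂) ∧
      Δ.2 * ∑' k : ℕ, ρD Δ ((k : ℝ) * Δ.2) ^ γ₂ ≤ B
  contract : ∀ Δ, Adm ht τt Δ → ∀ x ∈ Eh Δ.1, ∀ y ∈ Eh Δ.1, ∀ k : ℕ,
    (∫⁻ ω, (‖Y Δ x k ω - Y Δ y k ω‖₊ : ℝ≥0∞) ^ (2 : ℝ) ∂ℙ) ^ ((1 : ℝ) / 2) ≤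
      ENNReal.ofReal (L₄ * ‖x - y‖ * (1 + ‖x‖ ^ κ + ‖y‖ ^ κ) * ρD Δ ((k : ℝ) * Δ.2))

/-- Assumption 3: uniform-in-time strong convergence of order `α` of the discretization
(started at the discretized initial datum `xh h` of `x`). -/
structure Assumption3 [NormedAddCommGroup E] [MeasurableSpace E]
    {mΩ : MeasurableSpace Ω} (ℙ : Measure Ω)
    (X : E → ℝ → Ω → E) (Y : ℝ × ℝ → E → ℕ → Ω → E) (Eh : ℝ → Set E)
    (ht τt rt qt : ℝ) (x : E) (xh : ℝ → E) (α₁ α₂ L₅ : ℝ) : Prop where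
  hα₁ : 0 < α₁
  hα₂ : 0 < α₂
  hL₅ : 0 < L₅
  xh_mem : ∀ h : ℝ, h ∈ Set.Icc (0 : ℝ) ht → xh h ∈ Eh h
  xh_eq : ∀ h : ℝ, x ∈ Eh h → xh h = x
  conv : ∀ Δ, Adm ht τt Δ → ∀ t : ℝ, 0 ≤ t →
    (∫⁻ ω, (‖X x t ω - Y Δ (xh Δ.1) ⌊t / Δ.2⌋₊ ω‖₊ : ℝ≥0∞) ^ (2 : ℝ) ∂ℙ) ^ ((1 : ℝ) / 2) ≤
      ENNReal.ofReal (L₅ * (1 + ‖x‖ ^ (max rt qt)) * (Δ.1 ^ α₁ + Δ.2 ^ α₂))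

/-! ### the discrete martingale and related objects -/

/-- the filtration `{F_{t_k}}_{k∈ℕ}` -/
def natFiltration {mΩ : MeasurableSpace Ω} (ℱ : Filtration ℝ mΩ) (τ : ℝ) (hτ : 0 ≤ τ) :
    Filtration ℕ mΩ where
  seq k := ℱ ((k : ℝ) * τ)
  mono' := fun _ _ hij =>
    ℱ.mono (mul_le_mul_of_nonneg_right (by exact_mod_cast hij) hτ)
  le' k := ℱ.le _

/-- the discrete martingale `M^{x^h,Δ}_k` (here `m` stands for `μ^Δ(f)`) -/
def Mart [MeasurableSpace Ω] (ℙ : Measure Ω) (Y : ℝ × ℝ → E → ℕ → Ω → E)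
    (Δ : ℝ × ℝ) (f : E → ℝ) (m : ℝ) (xh : E) (k : ℕ) (ω : Ω) : ℝ :=
  Δ.2 * ∑ i ∈ Finset.range k, (f (Y Δ xh i ω) - m) +
    Δ.2 * ∑' i : ℕ, (PD ℙ Y Δ i f (Y Δ xh k ω) - m) -
    Δ.2 * ∑' i : ℕ, (PD ℙ Y Δ i f xh - m)

/-- the martingale difference sequence `Z^{x^h,Δ}_k` -/
def Zseq [MeasurableSpace Ω] (ℙ : Measure Ω) (Y : ℝ × ℝ → E → ℕ → Ω → E)
    (Δ : ℝ × ℝ) (f : E → ℝ) (m : ℝ) (xh : E) (k : ℕ) (ω : Ω) : ℝ :=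
  if k = 0 then 0 else Mart ℙ Y Δ f m xh k ω - Mart ℙ Y Δ f m xh (k - 1) ω

/-- the conditional-variance function `H^Δ` -/
def Hfun [MeasurableSpace Ω] (ℙ : Measure Ω) (Y : ℝ × ℝ → E → ℕ → Ω → E)
    (Δ : ℝ × ℝ) (f : E → ℝ) (m : ℝ) (u : E) : ℝ :=
  -(Δ.2 ^ 2) * |f u - m| ^ 2 +
    Δ.2 ^ 2 * ∫ ω, |∑' i : ℕ, (PD ℙ Y Δ i f (Y Δ u 1 ω) - m)| ^ 2 ∂ℙ -
    Δ.2 ^ 2 * |∑' i : ℕ, (PD ℙ Y Δ i f u - m)| ^ 2 +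
    2 * Δ.2 ^ 2 * (f u - m) * ∑' i : ℕ, (PD ℙ Y Δ i f u - m)

/-!
Both semigroups forget their initial point. For a bounded `d_{p,γ}`-Lipschitz `g`, the contraction
estimates give `P_t g y - P_t g x → 0` along times `t_n → ∞` with `ρ t_n → 0` (they exist since
`ρ ^ γ₁` is integrable), and `P^Δ_k g y - P^Δ_k g x^h → 0` as `k → ∞` (since `ρ^Δ(t_k) ^ γ₂` is
summable); integrating in `y` against the invariant measures yields
`μ(g) = lim P_{t_n} g x` and `μ^Δ(g) = lim P^Δ_{k_n} g x^h` with `k_n = ⌊t_n / τ⌋`.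
For every `n`, the Lipschitz bound, Cauchy–Schwarz, Jensen's inequality and the moment bounds
control `|P_{t_n} g x - P^Δ_{k_n} g x^h|` by the `γ`-th power of the uniform strong error of
Assumption 3, hence by `K |Δ^α| ^ γ`. A general `f ∈ C_{p,γ}` is the limit of its truncations,
which keep its Lipschitz constant; it is integrable for both invariant measures because the same
limits bound `∫ min N |f|` by the `p/2`-moments.
-/

section Moments

variable {α : Type*} [MeasurableSpace α] {ν : Measure α} [IsProbabilityMeasure ν]
  [NormedAddCommGroup E]

lemma lintegral_enorm_rpow_le_of_exponent_le {U : α → E} (hU : AEStronglyMeasurable U ν)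
    {c c' : ℝ} (hc : 0 < c) (hcc' : c ≤ c') :
    ∫⁻ a, ‖U a‖ₑ ^ c ∂ν ≤ (∫⁻ a, ‖U a‖ₑ ^ c' ∂ν) ^ (c / c') := by
  have h := ENNReal.rpow_le_rpow (eLpNorm'_le_eLpNorm'_of_exponent_le hc hcc' ν hU) hc.le
  rwa [eLpNorm', eLpNorm', ← ENNReal.rpow_mul, one_div_mul_cancel hc.ne', ENNReal.rpow_one,
    ← ENNReal.rpow_mul, one_div_mul_eq_div] at h

lemma lintegral_enorm_rpow_le_ofReal {U : α → E} (hU : AEStronglyMeasurable U ν)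
    {c c' m : ℝ} (hc : 0 < c) (hcc' : c ≤ c') (hm : 0 ≤ m)
    (h : ∫⁻ a, ‖U a‖ₑ ^ c' ∂ν ≤ ENNReal.ofReal m) :
    ∫⁻ a, ‖U a‖ₑ ^ c ∂ν ≤ ENNReal.ofReal (m ^ (c / c')) := by
  rw [← ENNReal.ofReal_rpow_of_nonneg hm (div_pos hc (hc.trans_le hcc')).le]
  exact (lintegral_enorm_rpow_le_of_exponent_le hU hc hcc').trans
    (ENNReal.rpow_le_rpow h (div_pos hc (hc.trans_le hcc')).le)

lemma lintegral_enorm_rpow_sq_le {Z : α → E} {γ : ℝ} (hZ : AEStronglyMeasurable Z ν) (hγ0 : 0 < γ)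
    (hγ1 : γ ≤ 1) {D : ℝ} (hD0 : 0 ≤ D)
    (hD : (∫⁻ a, ‖Z a‖ₑ ^ (2 : ℝ) ∂ν) ^ (1 / 2 : ℝ) ≤ ENNReal.ofReal D) :
    (∫⁻ a, (‖Z a‖ₑ ^ γ) ^ (2 : ℝ) ∂ν) ^ (1 / 2 : ℝ) ≤ ENNReal.ofReal (D ^ γ) := by
  have hJensen := lintegral_enorm_rpow_le_of_exponent_le hZ (by positivity : 0 < γ * 2)
    (by linarith : γ * 2 ≤ 2)
  calc (∫⁻ a, (‖Z a‖ₑ ^ γ) ^ (2 : ℝ) ∂ν) ^ (1 / 2 : ℝ)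
      = (∫⁻ a, ‖Z a‖ₑ ^ (γ * 2) ∂ν) ^ (1 / 2 : ℝ) := by simp_rw [ENNReal.rpow_mul]
    _ ≤ ((∫⁻ a, ‖Z a‖ₑ ^ (2 : ℝ) ∂ν) ^ (γ * 2 / 2)) ^ (1 / 2 : ℝ) :=
        ENNReal.rpow_le_rpow hJensen (by norm_num)
    _ = ((∫⁻ a, ‖Z a‖ₑ ^ (2 : ℝ) ∂ν) ^ (1 / 2 : ℝ)) ^ γ := by
        rw [← ENNReal.rpow_mul, ← ENNReal.rpow_mul]; ring_nf
    _ ≤ ENNReal.ofReal D ^ γ := ENNReal.rpow_le_rpow hD hγ0.le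
    _ = ENNReal.ofReal (D ^ γ) := ENNReal.ofReal_rpow_of_nonneg hD0 hγ0.le

end Moments

section Expectations

variable {α : Type*} [MeasurableSpace α] {ν : Measure α} [IsProbabilityMeasure ν]

lemma abs_integral_le_of_abs_le {φ : α → ℝ} {C : ℝ} (h : ∀ a, |φ a| ≤ C) :
    |∫ a, φ a ∂ν| ≤ C := by
  simpa using norm_integral_le_of_norm_le_const (μ := ν) (f := φ) (ae_of_all _ h)

lemma integral_comp_le_of_abs_le [NormedAddCommGroup E] {U : α → E} {g : E → ℝ}
    {F s c : ℝ} (hF : 0 ≤ F) (hs : 0 ≤ s) (hc : 0 ≤ c)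
    (hgrowth : ∀ u, |g u| ≤ F * (1 + ‖u‖ ^ s))
    (hmom : ∫⁻ a, ‖U a‖ₑ ^ s ∂ν ≤ ENNReal.ofReal c) :
    ∫ a, g (U a) ∂ν ≤ F * (1 + c) := by
  refine (Real.le_norm_self _).trans ((norm_integral_le_lintegral_norm _).trans
    (ENNReal.toReal_le_of_le_ofReal (by positivity) ?_))
  calc ∫⁻ a, ENNReal.ofReal ‖g (U a)‖ ∂ν
      ≤ ∫⁻ a, ENNReal.ofReal F * (1 + ‖U a‖ₑ ^ s) ∂ν := lintegral_mono fun a => by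
        rw [← ofReal_norm, ENNReal.ofReal_rpow_of_nonneg (norm_nonneg _) hs,
          ← ENNReal.ofReal_one, ← ENNReal.ofReal_add zero_le_one (by positivity),
          ← ENNReal.ofReal_mul hF]
        exact ENNReal.ofReal_le_ofReal (hgrowth _)
    _ = ENNReal.ofReal F * (1 + ∫⁻ a, ‖U a‖ₑ ^ s ∂ν) := by
        rw [lintegral_const_mul' _ _ ENNReal.ofReal_ne_top,
          lintegral_add_left' aemeasurable_const, lintegral_const, measure_univ, mul_one]
    _ ≤ ENNReal.ofReal (F * (1 + c)) := by
        rw [ENNReal.ofReal_mul hF, ENNReal.ofReal_add zero_le_one hc, ENNReal.ofReal_one]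
        gcongr

end Expectations

lemma measurable_integral_comp {α β : Type*} [MeasurableSpace α] [MeasurableSpace β]
    [MeasurableSpace E] {ν : Measure α} [SFinite ν] {Z : β → α → E}
    (hZ : Measurable fun q : β × α => Z q.1 q.2) {g : E → ℝ} (hg : Measurable g) :
    Measurable fun y => ∫ a, g (Z y a) ∂ν :=
  (hg.comp hZ).stronglyMeasurable.integral_prod_right'.measurable

section DQLipschitz

variable [NormedAddCommGroup E] {p γ G : ℝ}

def DQLipschitzWith (p γ G : ℝ) (g : E → ℝ) : Prop :=
  ∀ u v, |g u - g v| ≤ G * dQ p γ u v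

lemma DQLipschitzWith.comp {g : E → ℝ} (hg : DQLipschitzWith p γ G g) {φ : ℝ → ℝ}
    (hφ : LipschitzWith 1 φ) : DQLipschitzWith p γ G (φ ∘ g) := fun u v => by
  have h := hφ.dist_le_mul (g u) (g v)
  rw [NNReal.coe_one, one_mul, Real.dist_eq, Real.dist_eq] at h
  exact h.trans (hg u v)

lemma ofReal_dQ_le (hp : 0 ≤ p) (hγ : 0 ≤ γ) (u v : E) :
    ENNReal.ofReal (dQ p γ u v) ≤ ‖u - v‖ₑ ^ γ * (1 + ‖u‖ₑ ^ p + ‖v‖ₑ ^ p) ^ (1 / 2 : ℝ) := by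
  have hw : 0 ≤ 1 + ‖u‖ ^ p + ‖v‖ ^ p := by positivity
  calc ENNReal.ofReal (dQ p γ u v)
      ≤ ENNReal.ofReal (‖u - v‖ ^ γ * (1 + ‖u‖ ^ p + ‖v‖ ^ p) ^ (1 / 2 : ℝ)) :=
        ENNReal.ofReal_le_ofReal
          (mul_le_mul_of_nonneg_right (min_le_right _ _) (by positivity))
    _ = ‖u - v‖ₑ ^ γ * (1 + ‖u‖ₑ ^ p + ‖v‖ₑ ^ p) ^ (1 / 2 : ℝ) := by
        rw [ENNReal.ofReal_mul (by positivity), ← ENNReal.ofReal_rpow_of_nonneg hw (by norm_num),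
          ← ENNReal.ofReal_rpow_of_nonneg (norm_nonneg _) hγ, ENNReal.ofReal_add (by positivity)
          (by positivity), ENNReal.ofReal_add zero_le_one (by positivity), ENNReal.ofReal_one,
          ← ENNReal.ofReal_rpow_of_nonneg (norm_nonneg _) hp,
          ← ENNReal.ofReal_rpow_of_nonneg (norm_nonneg _) hp, ofReal_norm, ofReal_norm,
          ofReal_norm]

end DQLipschitz

section CouplingEstimate

variable {α : Type*} [MeasurableSpace α] {ν : Measure α} [IsProbabilityMeasure ν]
  [NormedAddCommGroup E] [MeasurableSpace E] [BorelSpace E] {p γ : ℝ}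

lemma lintegral_weight_sq_le {U V : α → E} (hV : Measurable V)
    {mU mV : ℝ} (hmU0 : 0 ≤ mU) (hmV0 : 0 ≤ mV)
    (hmU : ∫⁻ a, ‖U a‖ₑ ^ p ∂ν ≤ ENNReal.ofReal mU)
    (hmV : ∫⁻ a, ‖V a‖ₑ ^ p ∂ν ≤ ENNReal.ofReal mV) :
    (∫⁻ a, ((1 + ‖U a‖ₑ ^ p + ‖V a‖ₑ ^ p) ^ (1 / 2 : ℝ)) ^ (2 : ℝ) ∂ν) ^ (1 / 2 : ℝ) ≤
      ENNReal.ofReal ((1 + mU + mV) ^ (1 / 2 : ℝ)) := by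
  rw [← ENNReal.ofReal_rpow_of_nonneg (by positivity) (by norm_num)]
  refine ENNReal.rpow_le_rpow ?_ (by norm_num)
  simp_rw [← ENNReal.rpow_mul, show (1 / 2 : ℝ) * 2 = 1 by norm_num, ENNReal.rpow_one]
  rw [lintegral_add_right _ (hV.enorm.pow_const _), lintegral_add_left' aemeasurable_const,
    lintegral_const, measure_univ, mul_one, ENNReal.ofReal_add (by positivity) hmV0,
    ENNReal.ofReal_add zero_le_one hmU0, ENNReal.ofReal_one]
  gcongr

variable [SecondCountableTopology E] in
lemma abs_integral_comp_sub_integral_comp_le {U V : α → E} (hU : Measurable U)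
    (hV : Measurable V) {g : E → ℝ} (hg : Measurable g) (hgb : Bdd g) {G : ℝ} (hG : 0 ≤ G)
    (hLip : DQLipschitzWith p γ G g) (hp : 0 ≤ p) (hγ0 : 0 < γ) (hγ1 : γ ≤ 1)
    {D mU mV : ℝ} (hD0 : 0 ≤ D) (hmU0 : 0 ≤ mU) (hmV0 : 0 ≤ mV)
    (hD : (∫⁻ a, ‖U a - V a‖ₑ ^ (2 : ℝ) ∂ν) ^ (1 / 2 : ℝ) ≤ ENNReal.ofReal D)
    (hmU : ∫⁻ a, ‖U a‖ₑ ^ p ∂ν ≤ ENNReal.ofReal mU)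
    (hmV : ∫⁻ a, ‖V a‖ₑ ^ p ∂ν ≤ ENNReal.ofReal mV) :
    |∫ a, g (U a) ∂ν - ∫ a, g (V a) ∂ν| ≤ G * D ^ γ * (1 + mU + mV) ^ (1 / 2 : ℝ) := by
  obtain ⟨C, hC⟩ := hgb
  have hint : ∀ W : α → E, Measurable W → Integrable (fun a => g (W a)) ν := fun W hW =>
    (integrable_const C).mono' (hg.comp hW).aestronglyMeasurable
      (ae_of_all _ fun a => hC (W a))
  set w : α → ℝ≥0∞ := fun a => (1 + ‖U a‖ₑ ^ p + ‖V a‖ₑ ^ p) ^ (1 / 2 : ℝ)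
  have hpt : ∀ a, ENNReal.ofReal ‖g (U a) - g (V a)‖ ≤
      ENNReal.ofReal G * (‖U a - V a‖ₑ ^ γ * w a) := fun a => by
    rw [Real.norm_eq_abs]
    calc ENNReal.ofReal |g (U a) - g (V a)| ≤ ENNReal.ofReal (G * dQ p γ (U a) (V a)) :=
          ENNReal.ofReal_le_ofReal (hLip _ _)
      _ ≤ ENNReal.ofReal G * (‖U a - V a‖ₑ ^ γ * w a) := by
          rw [ENNReal.ofReal_mul hG]
          exact mul_le_mul_right (ofReal_dQ_le hp hγ0.le _ _) _
  have hHolder := ENNReal.lintegral_mul_le_Lp_mul_Lq ν Real.HolderConjugate.two_two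
    (f := fun a => ‖U a - V a‖ₑ ^ γ) (g := w) ((hU.sub hV).enorm.pow_const γ).aemeasurable
    ((((hU.enorm.pow_const p).const_add 1).add (hV.enorm.pow_const p)).pow_const _).aemeasurable
  rw [← integral_sub (hint U hU) (hint V hV), ← Real.norm_eq_abs]
  refine (norm_integral_le_lintegral_norm _).trans
    (ENNReal.toReal_le_of_le_ofReal (by positivity) ?_)
  calc ∫⁻ a, ENNReal.ofReal ‖g (U a) - g (V a)‖ ∂ν
      ≤ ∫⁻ a, ENNReal.ofReal G * (‖U a - V a‖ₑ ^ γ * w a) ∂ν := lintegral_mono hpt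
    _ = ENNReal.ofReal G * ∫⁻ a, ‖U a - V a‖ₑ ^ γ * w a ∂ν :=
        lintegral_const_mul' _ _ ENNReal.ofReal_ne_top
    _ ≤ ENNReal.ofReal G * (ENNReal.ofReal (D ^ γ) *
          ENNReal.ofReal ((1 + mU + mV) ^ (1 / 2 : ℝ))) := by
        gcongr
        refine hHolder.trans (mul_le_mul' ?_ ?_)
        · simpa using lintegral_enorm_rpow_sq_le (hU.sub hV).aestronglyMeasurable hγ0 hγ1 hD0 hD
        · simpa [w] using lintegral_weight_sq_le hV hmU0 hmV0 hmU hmV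
    _ = ENNReal.ofReal (G * D ^ γ * (1 + mU + mV) ^ (1 / 2 : ℝ)) := by
        rw [ENNReal.ofReal_mul (by positivity), ENNReal.ofReal_mul hG, mul_assoc]

end CouplingEstimate

section Limits

variable {α : Type*} [MeasurableSpace α] {ν : Measure α}

lemma tendsto_of_integral_eq_of_tendsto_sub [IsProbabilityMeasure ν] {φ : ℕ → α → ℝ}
    {C I : ℝ} {x : α} (hmeas : ∀ n, AEStronglyMeasurable (φ n) ν)
    (hbdd : ∀ n y, |φ n y| ≤ C) (hint : ∀ n, ∫ y, φ n y ∂ν = I)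
    (hlim : ∀ᵐ y ∂ν, Tendsto (fun n => φ n y - φ n x) atTop (𝓝 0)) :
    Tendsto (fun n => φ n x) atTop (𝓝 I) := by
  have hDCT : Tendsto (fun n => ∫ y, (φ n y - φ n x) ∂ν) atTop (𝓝 (∫ _, (0 : ℝ) ∂ν)) :=
    tendsto_integral_of_dominated_convergence (fun _ => C + C)
      (fun n => (hmeas n).sub aestronglyMeasurable_const) (integrable_const _)
      (fun n => ae_of_all _ fun y => (abs_sub _ _).trans (add_le_add (hbdd n y) (hbdd n x)))
      hlim
  have heq : ∀ n, ∫ y, (φ n y - φ n x) ∂ν = I - φ n x := fun n => by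
    rw [integral_sub ((integrable_const C).mono' (hmeas n) (ae_of_all _ (hbdd n)))
      (integrable_const _), integral_const, probReal_univ, one_smul, hint n]
  rw [integral_zero] at hDCT
  simpa using (tendsto_const_nhds (x := I)).sub (hDCT.congr heq)

lemma max_neg_min_eq_self {N y : ℝ} (h : |y| ≤ N) : max (-N) (min N y) = y := by
  rw [abs_le] at h
  rw [min_eq_right h.2, max_eq_right h.1]

lemma abs_max_neg_min_le (N y : ℝ) (hN : 0 ≤ N) : |max (-N) (min N y)| ≤ |y| := by
  rw [abs_le]
  constructor
  · exact le_max_of_le_right (le_min (by linarith [abs_nonneg y]) (neg_abs_le y))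
  · exact max_le (by linarith [abs_nonneg y]) ((min_le_right _ _).trans (le_abs_self y))

lemma tendsto_integral_max_neg_min {f : α → ℝ} (hf : Integrable f ν) :
    Tendsto (fun N : ℕ => ∫ a, max (-(N : ℝ)) (min (N : ℝ) (f a)) ∂ν) atTop
      (𝓝 (∫ a, f a ∂ν)) :=
  tendsto_integral_of_dominated_convergence (fun a => |f a|)
    (fun N => (continuous_const.max (continuous_const.min continuous_id)).comp_aestronglyMeasurable
      hf.1)
    hf.abs (fun N => ae_of_all _ fun a => abs_max_neg_min_le _ _ N.cast_nonneg)
    (ae_of_all _ fun a => tendsto_atTop_of_eventually_const (i₀ := ⌈|f a|⌉₊) fun N hN =>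
      max_neg_min_eq_self ((Nat.le_ceil _).trans (by exact_mod_cast hN)))

lemma integrable_of_integral_min_abs_le [IsFiniteMeasure ν] {f : α → ℝ}
    (hf : AEStronglyMeasurable f ν) {M : ℝ} (h : ∀ N : ℕ, ∫ a, min (N : ℝ) |f a| ∂ν ≤ M) :
    Integrable f ν := by
  have hmin : ∀ N : ℕ, Integrable (fun a => min (N : ℝ) |f a|) ν := fun N =>
    (integrable_const (N : ℝ)).mono'
      ((continuous_const.min continuous_abs).comp_aestronglyMeasurable hf)
      (ae_of_all _ fun a => by
        rw [Real.norm_eq_abs, abs_of_nonneg (le_min N.cast_nonneg (abs_nonneg _))]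
        exact min_le_left _ _)
  have hMCT : Tendsto (fun N : ℕ => ∫⁻ a, ENNReal.ofReal (min (N : ℝ) |f a|) ∂ν) atTop
      (𝓝 (∫⁻ a, ‖f a‖ₑ ∂ν)) := by
    refine lintegral_tendsto_of_tendsto_of_monotone
      (fun N => (hmin N).1.aemeasurable.ennreal_ofReal)
      (ae_of_all _ fun a i j hij => ENNReal.ofReal_le_ofReal
        (min_le_min_right _ (by exact_mod_cast hij)))
      (ae_of_all _ fun a => ?_)
    rw [Real.enorm_eq_ofReal_abs]
    refine tendsto_atTop_of_eventually_const (i₀ := ⌈|f a|⌉₊) fun N hN => ?_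
    rw [min_eq_right ((Nat.le_ceil _).trans (by exact_mod_cast hN))]
  refine ⟨hf, lt_of_le_of_lt (le_of_tendsto' hMCT fun N => ?_) (ENNReal.ofReal_lt_top (r := M))⟩
  rw [← ofReal_integral_eq_lintegral_ofReal (hmin N)
    (ae_of_all _ fun a => le_min N.cast_nonneg (abs_nonneg _))]
  exact ENNReal.ofReal_le_ofReal (h N)

end Limits

lemma exists_tendsto_zero_of_integrableOn_rpow {ρ : ℝ → ℝ} {γ : ℝ} (hρ : ∀ t, 0 ≤ ρ t)
    (hγ : 0 < γ) (hint : IntegrableOn (fun t => ρ t ^ γ) (Ici 0)) :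
    ∃ t : ℕ → ℝ, (∀ n : ℕ, (n : ℝ) ≤ t n) ∧ Tendsto (fun n => ρ (t n)) atTop (𝓝 0) := by
  have hsmall : ∀ n : ℕ, ∃ T, (n : ℝ) ≤ T ∧ ρ T < 1 / ((n : ℝ) + 1) := by
    intro n
    by_contra! hlarge
    have hε : (0 : ℝ) < 1 / ((n : ℝ) + 1) := by positivity
    -- otherwise `ρ ^ γ` would dominate a positive constant on a half-line of infinite measure
    have hconst : IntegrableOn (fun _ => (1 / ((n : ℝ) + 1)) ^ γ) (Ici (n : ℝ)) :=
      (hint.mono_set (Ici_subset_Ici.2 n.cast_nonneg)).mono' aestronglyMeasurable_const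
        ((ae_restrict_iff' measurableSet_Ici).2 (ae_of_all _ fun s hs => by
          rw [Real.norm_eq_abs, abs_of_nonneg (by positivity)]
          exact Real.rpow_le_rpow hε.le (hlarge s hs) hγ.le))
    rcases (integrableOn_const_iff).1 hconst with h | h
    · exact (Real.rpow_pos_of_pos hε γ).ne' (enorm_eq_zero.1 h)
    · simp [Real.volume_Ici] at h
  choose t ht_ge ht_small using hsmall
  refine ⟨t, ht_ge, squeeze_zero (fun n => hρ _) (fun n => (ht_small n).le)
    tendsto_one_div_add_atTop_nhds_zero_nat⟩

lemma tendsto_zero_of_summable_rpow {a : ℕ → ℝ} {γ : ℝ} (ha : ∀ k, 0 ≤ a k) (hγ : 0 < γ)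
    (hs : Summable fun k => a k ^ γ) : Tendsto a atTop (𝓝 0) := by
  have h := hs.tendsto_atTop_zero.rpow_const (p := 1 / γ) (Or.inr (by positivity))
  rw [Real.zero_rpow (by positivity)] at h
  refine h.congr fun k => ?_
  rw [← Real.rpow_mul (ha k), mul_one_div_cancel hγ.ne', Real.rpow_one]

lemma tendsto_mul_rpow_mul_zero {a : ℕ → ℝ} (ha : Tendsto a atTop (𝓝 0)) {γ : ℝ} (hγ : 0 < γ)
    (G A M : ℝ) : Tendsto (fun n => G * (A * a n) ^ γ * M) atTop (𝓝 0) := by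
  have h := ((ha.const_mul A).rpow_const (p := γ) (Or.inr hγ.le)).const_mul G |>.mul_const M
  rwa [mul_zero, Real.zero_rpow hγ.ne', mul_zero, zero_mul] at h

lemma rpow_le_max_one {c γ : ℝ} (hc : 0 ≤ c) (hγ0 : 0 ≤ γ) (hγ1 : γ ≤ 1) :
    c ^ γ ≤ max 1 c := by
  rcases le_total c 1 with h | h
  · exact (Real.rpow_le_one hc h hγ0).trans (le_max_left _ _)
  · exact (Real.rpow_le_self_of_one_le h hγ1).trans (le_max_right _ _)

section TestFunctions

variable [NormedAddCommGroup E] {p γ : ℝ} {f : E → ℝ}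

lemma dQ_nonneg (p γ : ℝ) (u v : E) : 0 ≤ dQ p γ u v :=
  mul_nonneg (le_min zero_le_one (by positivity)) (by positivity)

lemma wQuot_le_sSup (hf : MemC univ p γ f) (u : E) : wQuot p f u ≤ sSup (wQuot p f '' univ) :=
  le_csSup hf.2.1 ⟨u, mem_univ _, rfl⟩

lemma hQuot_le_sSup (hf : MemC univ p γ f) (u v : E) :
    hQuot p γ f (u, v) ≤ sSup (hQuot p γ f '' (univ ×ˢ univ)) :=
  le_csSup hf.2.2 ⟨(u, v), mk_mem_prod (mem_univ _) (mem_univ _), rfl⟩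

lemma MemC.abs_le (hf : MemC univ p γ f) (u : E) :
    |f u| ≤ CNorm univ p γ f * (1 + ‖u‖ ^ (p / 2)) := by
  have hhQuot : 0 ≤ sSup (hQuot p γ f '' (univ ×ˢ univ)) :=
    (div_nonneg (abs_nonneg _) (dQ_nonneg p γ _ _)).trans (hQuot_le_sSup hf 0 0)
  have hw : wQuot p f u ≤ CNorm univ p γ f :=
    (wQuot_le_sSup hf u).trans (le_add_of_nonneg_right hhQuot)
  rwa [wQuot, div_le_iff₀ (by positivity)] at hw

lemma CNorm_nonneg (hf : MemC univ p γ f) : 0 ≤ CNorm univ p γ f :=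
  nonneg_of_mul_nonneg_left ((abs_nonneg _).trans (hf.abs_le 0)) (by positivity)

lemma MemC.dQLipschitzWith (hf : MemC univ p γ f) :
    DQLipschitzWith p γ (CNorm univ p γ f) f := by
  intro u v
  rcases eq_or_ne u v with rfl | huv
  · simpa using mul_nonneg (CNorm_nonneg hf) (dQ_nonneg p γ u u)
  have hd : 0 < dQ p γ u v :=
    mul_pos (lt_min one_pos (Real.rpow_pos_of_pos (norm_pos_iff.2 (sub_ne_zero.2 huv)) _))
      (by positivity)
  have hwQuot : 0 ≤ sSup (wQuot p f '' univ) :=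
    (div_nonneg (abs_nonneg _) (by positivity)).trans (wQuot_le_sSup hf 0)
  have hh : hQuot p γ f (u, v) ≤ CNorm univ p γ f :=
    (hQuot_le_sSup hf u v).trans (le_add_of_nonneg_left hwQuot)
  rwa [hQuot, div_le_iff₀ hd] at hh

end TestFunctions

lemma MemC.integrable_of_tendsto [NormedAddCommGroup E] [MeasurableSpace E] [BorelSpace E]
    {α : Type*} [MeasurableSpace α] {ℙ : Measure α} [IsProbabilityMeasure ℙ] {ν : Measure E}
    [IsProbabilityMeasure ν] {p γ c : ℝ} {f : E → ℝ} (hf : MemC univ p γ f) (hp : 0 ≤ p)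
    (hc : 0 ≤ c) {U : ℕ → α → E} (hmom : ∀ n, ∫⁻ a, ‖U n a‖ₑ ^ (p / 2) ∂ℙ ≤ ENNReal.ofReal c)
    (hlim : ∀ (g : E → ℝ) (G : ℝ), Measurable g → Bdd g → 0 ≤ G → DQLipschitzWith p γ G g →
      Tendsto (fun n => ∫ a, g (U n a) ∂ℙ) atTop (𝓝 (∫ u, g u ∂ν))) :
    Integrable f ν := by
  have hfc : Continuous f := continuousOn_univ.1 hf.1
  have hmin : ∀ (N : ℕ) u, |min (N : ℝ) (|f u|)| = min (N : ℝ) |f u| := fun N u =>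
    abs_of_nonneg (le_min N.cast_nonneg (abs_nonneg _))
  refine integrable_of_integral_min_abs_le hfc.aestronglyMeasurable
    (M := CNorm univ p γ f * (1 + c)) fun N => le_of_tendsto' (hlim _ _
      (measurable_const.min hfc.measurable.abs) ⟨N, fun u => (hmin N u).trans_le (min_le_left _ _)⟩
      (CNorm_nonneg hf) (hf.dQLipschitzWith.comp (lipschitzWith_one_norm.const_min (N : ℝ))))
    fun n => integral_comp_le_of_abs_le (U := U n) (g := fun u => min (N : ℝ) |f u|)
      (s := p / 2) (CNorm_nonneg hf) (by positivity) hc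
      (fun u => (hmin N u).trans_le ((min_le_right _ _).trans (hf.abs_le u))) (hmom n)

section ExactSemigroup

variable [NormedAddCommGroup E] [NormedSpace ℝ E] [MeasurableSpace E] [BorelSpace E]
  {mΩ : MeasurableSpace Ω} {ℙ : Measure Ω} {ℱ : Filtration ℝ mΩ}
  {X : E → ℝ → Ω → E} {r rt γ₁ β L₁ L₂ : ℝ} {ρ : ℝ → ℝ} {μ : Measure E} {p γ G : ℝ}
  {g : E → ℝ}

lemma Assumption1.measurable (hA : Assumption1 ℙ ℱ X r rt γ₁ β L₁ L₂ ρ) (y : E) (t : ℝ) :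
    Measurable (X y t) :=
  (hA.jmeas t).comp measurable_prodMk_left

variable [SecondCountableTopology E]

lemma Assumption1.lintegral_enorm_rpow_le (hA : Assumption1 ℙ ℱ X r rt γ₁ β L₁ L₂ ρ)
    {s : ℝ} (hs : 0 < s) (hsr : s ≤ r) (y : E) {t : ℝ} (ht : 0 ≤ t) :
    ∫⁻ ω, ‖X y t ω‖ₑ ^ s ∂ℙ ≤ ENNReal.ofReal ((L₁ * (1 + ‖y‖ ^ (rt * r))) ^ (s / r)) :=
  have := hA.prob
  have := hA.hL₁
  lintegral_enorm_rpow_le_ofReal (hA.measurable y t).aestronglyMeasurable hs hsr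
    (by positivity) (hA.moment y t ht)

lemma Assumption1.tendsto_Pt (hA : Assumption1 ℙ ℱ X r rt γ₁ β L₁ L₂ ρ)
    (hμ : IsInvMeasure ℙ X μ) (hp0 : 0 < p) (hpr : p ≤ r) (hγ0 : 0 < γ) (hγ1 : γ ≤ 1)
    (hg : Measurable g) (hgb : Bdd g) (hG : 0 ≤ G) (hLip : DQLipschitzWith p γ G g)
    {t : ℕ → ℝ} (ht : ∀ n, 0 ≤ t n) (hρ : Tendsto (fun n => ρ (t n)) atTop (𝓝 0)) (x : E) :
    Tendsto (fun n => Pt ℙ X (t n) g x) atTop (𝓝 (∫ u, g u ∂μ)) := by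
  have := hA.prob
  have := hμ.1
  have := hA.hL₁
  have := hA.hL₂
  obtain ⟨C, hC⟩ := hgb
  refine tendsto_of_integral_eq_of_tendsto_sub
    (fun n => (measurable_integral_comp (hA.jmeas (t n)) hg).aestronglyMeasurable)
    (fun n y => abs_integral_le_of_abs_le fun ω => hC _)
    (fun n => hμ.2 _ (ht n) g hg ⟨C, hC⟩) (ae_of_all _ fun y => ?_)
  refine squeeze_zero_norm (fun n => ?_) (tendsto_mul_rpow_mul_zero hρ hγ0 G
    (L₂ * ‖y - x‖ * (1 + ‖y‖ ^ β + ‖x‖ ^ β))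
    ((1 + (L₁ * (1 + ‖y‖ ^ (rt * r))) ^ (p / r) + (L₁ * (1 + ‖x‖ ^ (rt * r))) ^ (p / r)) ^
      (1 / 2 : ℝ)))
  exact abs_integral_comp_sub_integral_comp_le (hA.measurable y _) (hA.measurable x _) hg
    ⟨C, hC⟩ hG hLip hp0.le hγ0 hγ1 (mul_nonneg (by positivity) (hA.ρ_nonneg _))
    (by positivity) (by positivity) (hA.contract y x _ (ht n))
    (hA.lintegral_enorm_rpow_le hp0 hpr y (ht n)) (hA.lintegral_enorm_rpow_le hp0 hpr x (ht n))

lemma Assumption1.integrable_of_memC (hA : Assumption1 ℙ ℱ X r rt γ₁ β L₁ L₂ ρ)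
    (hμ : IsInvMeasure ℙ X μ) (hp0 : 0 < p) (hpr : p ≤ r) (hγ0 : 0 < γ) (hγ1 : γ ≤ 1)
    {f : E → ℝ} (hf : MemC univ p γ f) : Integrable f μ := by
  have := hA.prob
  have := hμ.1
  have := hA.hL₁
  obtain ⟨t, ht_ge, hρt⟩ := exists_tendsto_zero_of_integrableOn_rpow hA.ρ_nonneg hA.hγ₁.1 hA.ρ_int
  have ht : ∀ n, 0 ≤ t n := fun n => n.cast_nonneg.trans (ht_ge n)
  exact hf.integrable_of_tendsto hp0.le (by positivity)
    (fun n => hA.lintegral_enorm_rpow_le (by positivity) (by linarith) 0 (ht n))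
    fun g G hg hgb hG hLip => hA.tendsto_Pt hμ hp0 hpr hγ0 hγ1 hg hgb hG hLip ht hρt 0

end ExactSemigroup

section NumericalChain

variable [NormedAddCommGroup E] [NormedSpace ℝ E] [MeasurableSpace E] [BorelSpace E]
  {mΩ : MeasurableSpace Ω} {ℙ : Measure Ω} {ℱ : Filtration ℝ mΩ} {Eh : ℝ → Set E}
  {Y : ℝ × ℝ → E → ℕ → Ω → E} {ht τt q qt γ₂ κ L₃ L₄ : ℝ} {ρD : ℝ × ℝ → ℝ → ℝ}
  {Δ : ℝ × ℝ} {ν : Measure E} {p γ G : ℝ} {g : E → ℝ}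

lemma Assumption2.measurable (hA : Assumption2 ℙ ℱ Eh Y ht τt q qt γ₂ κ L₃ L₄ ρD)
    (Δ : ℝ × ℝ) (y : E) (k : ℕ) : Measurable (Y Δ y k) :=
  (hA.jmeas Δ k).comp measurable_prodMk_left

lemma Assumption2.tendsto_ρD (hA : Assumption2 ℙ ℱ Eh Y ht τt q qt γ₂ κ L₃ L₄ ρD)
    (hΔ : Adm ht τt Δ) : Tendsto (fun k : ℕ => ρD Δ (k * Δ.2)) atTop (𝓝 0) := by
  obtain ⟨B, hB⟩ := hA.ρD_sum
  exact tendsto_zero_of_summable_rpow (fun k => hA.ρD_nonneg _ _) hA.hγ₂.1 (hB Δ hΔ).1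

variable [SecondCountableTopology E]

lemma Assumption2.lintegral_enorm_rpow_le (hA : Assumption2 ℙ ℱ Eh Y ht τt q qt γ₂ κ L₃ L₄ ρD)
    (hΔ : Adm ht τt Δ) {s : ℝ} (hs : 0 < s) (hsq : s ≤ q) {y : E} (hy : y ∈ Eh Δ.1) (k : ℕ) :
    ∫⁻ ω, ‖Y Δ y k ω‖ₑ ^ s ∂ℙ ≤ ENNReal.ofReal ((L₃ * (1 + ‖y‖ ^ (qt * q))) ^ (s / q)) :=
  have := hA.prob
  have := hA.hL₃
  lintegral_enorm_rpow_le_ofReal (hA.measurable Δ y k).aestronglyMeasurable hs hsq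
    (by positivity) (hA.moment Δ hΔ y hy k)

lemma Assumption2.tendsto_PD (hA : Assumption2 ℙ ℱ Eh Y ht τt q qt γ₂ κ L₃ L₄ ρD)
    (hΔ : Adm ht τt Δ) (hν : IsInvMeasureD ℙ Y (Eh Δ.1) Δ ν) (hp0 : 0 < p) (hpq : p ≤ q)
    (hγ0 : 0 < γ) (hγ1 : γ ≤ 1) (hg : Measurable g) (hgb : Bdd g) (hG : 0 ≤ G)
    (hLip : DQLipschitzWith p γ G g) {k : ℕ → ℕ} (hk : Tendsto k atTop atTop) {z : E}
    (hz : z ∈ Eh Δ.1) :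
    Tendsto (fun n => PD ℙ Y Δ (k n) g z) atTop (𝓝 (∫ u, g u ∂ν)) := by
  have := hA.prob
  have := hν.1
  have := hA.hL₃
  have := hA.hL₄
  obtain ⟨C, hC⟩ := hgb
  have hEh : ∀ᵐ y ∂ν, y ∈ Eh Δ.1 := ae_iff.2 hν.2.1
  refine tendsto_of_integral_eq_of_tendsto_sub
    (fun n => (measurable_integral_comp (hA.jmeas Δ (k n)) hg).aestronglyMeasurable)
    (fun n y => abs_integral_le_of_abs_le fun ω => hC _)
    (fun n => hν.2.2 _ g hg ⟨C, hC⟩) (hEh.mono fun y hy => ?_)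
  refine squeeze_zero_norm (fun n => ?_) (tendsto_mul_rpow_mul_zero
    ((hA.tendsto_ρD hΔ).comp hk) hγ0 G (L₄ * ‖y - z‖ * (1 + ‖y‖ ^ κ + ‖z‖ ^ κ))
    ((1 + (L₃ * (1 + ‖y‖ ^ (qt * q))) ^ (p / q) + (L₃ * (1 + ‖z‖ ^ (qt * q))) ^ (p / q)) ^
      (1 / 2 : ℝ)))
  exact abs_integral_comp_sub_integral_comp_le (hA.measurable Δ y _) (hA.measurable Δ z _) hg
    ⟨C, hC⟩ hG hLip hp0.le hγ0 hγ1 (mul_nonneg (by positivity) (hA.ρD_nonneg _ _))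
    (by positivity) (by positivity) (hA.contract Δ hΔ y hy z hz (k n))
    (hA.lintegral_enorm_rpow_le hΔ hp0 hpq hy _) (hA.lintegral_enorm_rpow_le hΔ hp0 hpq hz _)

lemma Assumption2.integrable_of_memC (hA : Assumption2 ℙ ℱ Eh Y ht τt q qt γ₂ κ L₃ L₄ ρD)
    (hΔ : Adm ht τt Δ) (hν : IsInvMeasureD ℙ Y (Eh Δ.1) Δ ν) (hp0 : 0 < p) (hpq : p ≤ q)
    (hγ0 : 0 < γ) (hγ1 : γ ≤ 1) {z : E} (hz : z ∈ Eh Δ.1) {f : E → ℝ}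
    (hf : MemC univ p γ f) : Integrable f ν := by
  have := hA.prob
  have := hν.1
  have := hA.hL₃
  exact hf.integrable_of_tendsto hp0.le (by positivity)
    (fun n => hA.lintegral_enorm_rpow_le hΔ (by positivity) (by linarith) hz n)
    fun g G hg hgb hG hLip => hA.tendsto_PD hΔ hν hp0 hpq hγ0 hγ1 hg hgb hG hLip tendsto_id hz

end NumericalChain

section Discretization

variable [NormedAddCommGroup E] [NormedSpace ℝ E] [MeasurableSpace E] [BorelSpace E]
  {mΩ : MeasurableSpace Ω} {ℙ : Measure Ω} {ℱ : Filtration ℝ mΩ} {X : E → ℝ → Ω → E}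
  {r rt γ₁ β L₁ L₂ : ℝ} {ρ : ℝ → ℝ} {Eh : ℝ → Set E} {Y : ℝ × ℝ → E → ℕ → Ω → E}
  {ht τt q qt γ₂ κ L₃ L₄ : ℝ} {ρD : ℝ × ℝ → ℝ → ℝ} {x : E} {xh : ℝ → E} {α₁ α₂ L₅ : ℝ}
  {Δ : ℝ × ℝ}

lemma Assumption3.norm_sub_xh_le (hA3 : Assumption3 ℙ X Y Eh ht τt rt qt x xh α₁ α₂ L₅)
    (hA1 : Assumption1 ℙ ℱ X r rt γ₁ β L₁ L₂ ρ)
    (hA2 : Assumption2 ℙ ℱ Eh Y ht τt q qt γ₂ κ L₃ L₄ ρD) (hΔ : Adm ht τt Δ) :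
    ‖x - xh Δ.1‖ ≤ L₅ * (1 + ‖x‖ ^ max rt qt) * (Δ.1 ^ α₁ + Δ.2 ^ α₂) := by
  have := hA1.prob
  have := hA3.hL₅
  have := hΔ.1.1
  have := hΔ.2.1
  -- at time `0` both processes still sit at their initial points
  have h0 := hA3.conv Δ hΔ 0 le_rfl
  simp only [zero_div, Nat.floor_zero, hA1.init, hA2.init Δ hΔ _ (hA3.xh_mem _ hΔ.1),
    lintegral_const, measure_univ, mul_one] at h0
  rw [← ENNReal.rpow_mul, show (2 : ℝ) * (1 / 2) = 1 by norm_num, ENNReal.rpow_one,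
    ← enorm_eq_nnnorm, ← ofReal_norm] at h0
  exact (ENNReal.ofReal_le_ofReal_iff (by positivity)).1 h0

lemma Assumption3.norm_xh_le (hA3 : Assumption3 ℙ X Y Eh ht τt rt qt x xh α₁ α₂ L₅)
    (hA1 : Assumption1 ℙ ℱ X r rt γ₁ β L₁ L₂ ρ)
    (hA2 : Assumption2 ℙ ℱ Eh Y ht τt q qt γ₂ κ L₃ L₄ ρD) (hΔ : Adm ht τt Δ) :
    ‖xh Δ.1‖ ≤ ‖x‖ + 2 * (L₅ * (1 + ‖x‖ ^ max rt qt)) := by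
  have := hA3.hL₅
  have h₁ := Real.rpow_le_one hΔ.1.1 (hΔ.1.2.trans hA2.hht.2) hA3.hα₁.le
  have h₂ := Real.rpow_le_one hΔ.2.1.le (hΔ.2.2.trans hA2.hτt.2) hA3.hα₂.le
  calc ‖xh Δ.1‖ ≤ ‖x‖ + ‖x - xh Δ.1‖ := norm_le_norm_add_norm_sub _ _
    _ ≤ ‖x‖ + L₅ * (1 + ‖x‖ ^ max rt qt) * (Δ.1 ^ α₁ + Δ.2 ^ α₂) := by
        gcongr; exact hA3.norm_sub_xh_le hA1 hA2 hΔ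
    _ ≤ ‖x‖ + 2 * (L₅ * (1 + ‖x‖ ^ max rt qt)) := by
        rw [mul_comm 2]; gcongr; linarith

end Discretization

section WeakError

variable [NormedAddCommGroup E] [NormedSpace ℝ E] [MeasurableSpace E] [BorelSpace E]
  [SecondCountableTopology E]
  {mΩ : MeasurableSpace Ω} {ℙ : Measure Ω} {ℱ : Filtration ℝ mΩ} {X : E → ℝ → Ω → E}
  {r rt γ₁ β L₁ L₂ : ℝ} {ρ : ℝ → ℝ} {Eh : ℝ → Set E} {Y : ℝ × ℝ → E → ℕ → Ω → E}
  {ht τt q qt γ₂ κ L₃ L₄ : ℝ} {ρD : ℝ × ℝ → ℝ → ℝ} {x : E} {xh : ℝ → E} {α₁ α₂ L₅ : ℝ}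
  {Δ : ℝ × ℝ} {p γ G R : ℝ} {g : E → ℝ}

lemma abs_Pt_sub_PD_le (hA1 : Assumption1 ℙ ℱ X r rt γ₁ β L₁ L₂ ρ)
    (hA2 : Assumption2 ℙ ℱ Eh Y ht τt q qt γ₂ κ L₃ L₄ ρD)
    (hA3 : Assumption3 ℙ X Y Eh ht τt rt qt x xh α₁ α₂ L₅) (hΔ : Adm ht τt Δ)
    (hR : ‖xh Δ.1‖ ≤ R) (hp0 : 0 < p) (hpr : p ≤ r) (hpq : p ≤ q) (hγ0 : 0 < γ) (hγ1 : γ ≤ 1)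
    (hg : Measurable g) (hgb : Bdd g) (hG : 0 ≤ G) (hLip : DQLipschitzWith p γ G g)
    {t : ℝ} (ht : 0 ≤ t) :
    |Pt ℙ X t g x - PD ℙ Y Δ ⌊t / Δ.2⌋₊ g (xh Δ.1)| ≤
      G * (L₅ * (1 + ‖x‖ ^ max rt qt) * (Δ.1 ^ α₁ + Δ.2 ^ α₂)) ^ γ *
        (1 + (L₁ * (1 + ‖x‖ ^ (rt * r))) ^ (p / r) + (L₃ * (1 + R ^ (qt * q))) ^ (p / q)) ^
          (1 / 2 : ℝ) := by
  have := hA1.prob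
  have := hA1.hL₁
  have := hA2.hL₃
  have := hA3.hL₅
  have := hΔ.1.1
  have := hΔ.2.1
  have hR0 : 0 ≤ R := (norm_nonneg _).trans hR
  have : 0 ≤ q := by linarith [hA2.hq]
  have : 0 ≤ qt := by linarith [hA2.hqt]
  have hxh := hA3.xh_mem _ hΔ.1
  refine abs_integral_comp_sub_integral_comp_le (hA1.measurable x t) (hA2.measurable Δ _ _) hg
    hgb hG hLip hp0.le hγ0 hγ1 (by positivity) (by positivity) (by positivity)
    (hA3.conv Δ hΔ t ht) (hA1.lintegral_enorm_rpow_le hp0 hpr x ht)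
    ((hA2.lintegral_enorm_rpow_le hΔ hp0 hpq hxh _).trans (ENNReal.ofReal_le_ofReal ?_))
  gcongr

variable {μ : Measure E} {μD : ℝ × ℝ → Measure E}

lemma abs_integral_sub_integral_le_of_bdd (hA1 : Assumption1 ℙ ℱ X r rt γ₁ β L₁ L₂ ρ)
    (hA2 : Assumption2 ℙ ℱ Eh Y ht τt q qt γ₂ κ L₃ L₄ ρD)
    (hA3 : Assumption3 ℙ X Y Eh ht τt rt qt x xh α₁ α₂ L₅) (hμ : IsInvMeasure ℙ X μ)
    (hμD : IsInvMeasureD ℙ Y (Eh Δ.1) Δ (μD Δ)) (hΔ : Adm ht τt Δ)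
    (hR : ‖xh Δ.1‖ ≤ R) (hp0 : 0 < p) (hpr : p ≤ r) (hpq : p ≤ q) (hγ0 : 0 < γ) (hγ1 : γ ≤ 1)
    (hg : Measurable g) (hgb : Bdd g) (hG : 0 ≤ G) (hLip : DQLipschitzWith p γ G g) :
    |∫ u, g u ∂μ - ∫ u, g u ∂(μD Δ)| ≤
      G * (L₅ * (1 + ‖x‖ ^ max rt qt) * (Δ.1 ^ α₁ + Δ.2 ^ α₂)) ^ γ *
        (1 + (L₁ * (1 + ‖x‖ ^ (rt * r))) ^ (p / r) + (L₃ * (1 + R ^ (qt * q))) ^ (p / q)) ^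
          (1 / 2 : ℝ) := by
  obtain ⟨t, ht_ge, hρt⟩ :=
    exists_tendsto_zero_of_integrableOn_rpow hA1.ρ_nonneg hA1.hγ₁.1 hA1.ρ_int
  have ht : ∀ n, 0 ≤ t n := fun n => n.cast_nonneg.trans (ht_ge n)
  have hk : Tendsto (fun n => ⌊t n / Δ.2⌋₊) atTop atTop :=
    tendsto_nat_floor_atTop.comp
      ((tendsto_atTop_mono ht_ge tendsto_natCast_atTop_atTop).atTop_div_const hΔ.2.1)
  have hlim := (hA1.tendsto_Pt hμ hp0 hpr hγ0 hγ1 hg hgb hG hLip ht hρt x).sub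
    (hA2.tendsto_PD hΔ hμD hp0 hpq hγ0 hγ1 hg hgb hG hLip hk (hA3.xh_mem _ hΔ.1))
  exact le_of_tendsto' hlim.abs fun n =>
    abs_Pt_sub_PD_le hA1 hA2 hA3 hΔ hR hp0 hpr hpq hγ0 hγ1 hg hgb hG hLip (ht n)

lemma abs_integral_sub_integral_le_of_memC (hA1 : Assumption1 ℙ ℱ X r rt γ₁ β L₁ L₂ ρ)
    (hA2 : Assumption2 ℙ ℱ Eh Y ht τt q qt γ₂ κ L₃ L₄ ρD)
    (hA3 : Assumption3 ℙ X Y Eh ht τt rt qt x xh α₁ α₂ L₅) (hμ : IsInvMeasure ℙ X μ)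
    (hμD : IsInvMeasureD ℙ Y (Eh Δ.1) Δ (μD Δ)) (hΔ : Adm ht τt Δ)
    (hR : ‖xh Δ.1‖ ≤ R) (hp0 : 0 < p) (hpr : p ≤ r) (hpq : p ≤ q) (hγ0 : 0 < γ) (hγ1 : γ ≤ 1)
    {f : E → ℝ} (hf : MemC univ p γ f) :
    |∫ u, f u ∂μ - ∫ u, f u ∂(μD Δ)| ≤
      CNorm univ p γ f * (L₅ * (1 + ‖x‖ ^ max rt qt) * (Δ.1 ^ α₁ + Δ.2 ^ α₂)) ^ γ *
        (1 + (L₁ * (1 + ‖x‖ ^ (rt * r))) ^ (p / r) + (L₃ * (1 + R ^ (qt * q))) ^ (p / q)) ^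
          (1 / 2 : ℝ) := by
  -- the truncations `max (-N) (min N f)` are bounded with the same Lipschitz constant as `f`
  have hlim := ((tendsto_integral_max_neg_min (hA1.integrable_of_memC hμ hp0 hpr hγ0 hγ1 hf)).sub
    (tendsto_integral_max_neg_min (hA2.integrable_of_memC hΔ hμD hp0 hpq hγ0 hγ1
      (hA3.xh_mem _ hΔ.1) hf))).abs
  exact le_of_tendsto' hlim fun N => abs_integral_sub_integral_le_of_bdd hA1 hA2 hA3 hμ hμD hΔ
    hR hp0 hpr hpq hγ0 hγ1
    (measurable_const.max (measurable_const.min (continuousOn_univ.1 hf.1).measurable))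
    ⟨N, fun u => abs_le.2 ⟨le_max_left _ _, max_le (by simp) (min_le_left _ _)⟩⟩
    (CNorm_nonneg hf)
    (hf.dQLipschitzWith.comp ((LipschitzWith.id.const_min (N : ℝ)).const_max (-N)))

end WeakError

theorem statement11_general
    {E Ω : Type*} [NormedAddCommGroup E] [NormedSpace ℝ E]
    [SecondCountableTopology E] [MeasurableSpace E] [BorelSpace E]
    {mΩ : MeasurableSpace Ω} (ℙ : Measure Ω) (ℱ : Filtration ℝ mΩ)
    (X : E → ℝ → Ω → E) (r rt γ₁ β L₁ L₂ : ℝ) (ρ : ℝ → ℝ)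
    (Eh : ℝ → Set E) (Y : ℝ × ℝ → E → ℕ → Ω → E)
    (ht τt q qt γ₂ κ L₃ L₄ : ℝ) (ρD : ℝ × ℝ → ℝ → ℝ)
    (x : E) (xh : ℝ → E) (α₁ α₂ L₅ : ℝ)
    (hA1 : Assumption1 ℙ ℱ X r rt γ₁ β L₁ L₂ ρ)
    (hA2 : Assumption2 ℙ ℱ Eh Y ht τt q qt γ₂ κ L₃ L₄ ρD)
    (hA3 : Assumption3 ℙ X Y Eh ht τt rt qt x xh α₁ α₂ L₅)
    (μ : Measure E) (hμ : IsInvMeasure ℙ X μ)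
    (μD : ℝ × ℝ → Measure E)
    (hμD : ∀ Δ, Adm ht τt Δ → IsInvMeasureD ℙ Y (Eh Δ.1) Δ (μD Δ))
    (p γ : ℝ) (hp : p ∈ Set.Icc (1 : ℝ) (min q r)) (hγ : γ ∈ Set.Ioc (0 : ℝ) 1) :
    ∃ K > (0 : ℝ), ∀ Δ, Adm ht τt Δ → ∀ f : E → ℝ, MemC Set.univ p γ f →
      |(∫ u, f u ∂μ) - ∫ u, f u ∂(μD Δ)| ≤
        K * CNorm Set.univ p γ f * (Δ.1 ^ α₁ + Δ.2 ^ α₂) ^ γ := by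
  obtain ⟨hγ0, hγ1⟩ := hγ
  have hp0 : 0 < p := one_pos.trans_le hp.1
  have hpq : p ≤ q := hp.2.trans (min_le_left _ _)
  have hpr : p ≤ r := hp.2.trans (min_le_right _ _)
  set c := L₅ * (1 + ‖x‖ ^ max rt qt)
  set M := 1 + (L₁ * (1 + ‖x‖ ^ (rt * r))) ^ (p / r) +
    (L₃ * (1 + (‖x‖ + 2 * c) ^ (qt * q))) ^ (p / q)
  have hc : 0 ≤ c := by have := hA3.hL₅; positivity
  have hM : 0 < M := by
    have := hA1.hL₁; have := hA2.hL₃; positivity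
  -- `c` is the strong-error constant; `M` bounds the `p`-th moments, using `‖x^h‖ ≤ ‖x‖ + 2 c`
  refine ⟨max 1 c * M ^ (1 / 2 : ℝ), by positivity, fun Δ hΔ f hf => ?_⟩
  have ha : 0 ≤ Δ.1 ^ α₁ + Δ.2 ^ α₂ := by have := hΔ.1.1; have := hΔ.2.1; positivity
  calc |(∫ u, f u ∂μ) - ∫ u, f u ∂(μD Δ)|
      ≤ CNorm univ p γ f * (c * (Δ.1 ^ α₁ + Δ.2 ^ α₂)) ^ γ * M ^ (1 / 2 : ℝ) :=
        abs_integral_sub_integral_le_of_memC hA1 hA2 hA3 hμ (hμD Δ hΔ) hΔ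
          (hA3.norm_xh_le hA1 hA2 hΔ) hp0 hpr hpq hγ0 hγ1 hf
    _ = CNorm univ p γ f * (c ^ γ * (Δ.1 ^ α₁ + Δ.2 ^ α₂) ^ γ) * M ^ (1 / 2 : ℝ) := by
        rw [Real.mul_rpow hc ha]
    _ ≤ CNorm univ p γ f * (max 1 c * (Δ.1 ^ α₁ + Δ.2 ^ α₂) ^ γ) * M ^ (1 / 2 : ℝ) := by
        have := CNorm_nonneg hf
        gcongr
        exact rpow_le_max_one hc hγ0.le hγ1
    _ = max 1 c * M ^ (1 / 2 : ℝ) * CNorm univ p γ f * (Δ.1 ^ α₁ + Δ.2 ^ α₂) ^ γ := by ring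

/-- weak convergence of the numerical invariant measure:
`|μ(f) − μ^Δ(f)| ≤ K‖f‖_{p,γ}|Δ^α|^γ` for every `f ∈ C_{p,γ}` and every
admissible `Δ`, with `K` independent of `Δ` and `f`. -/
theorem statement11
    {E Ω : Type*} [NormedAddCommGroup E] [NormedSpace ℝ E] [CompleteSpace E]
    [SecondCountableTopology E] [MeasurableSpace E] [BorelSpace E]
    {mΩ : MeasurableSpace Ω} (ℙ : Measure Ω) (ℱ : Filtration ℝ mΩ)
    (X : E → ℝ → Ω → E) (r rt γ₁ β L₁ L₂ : ℝ) (ρ : ℝ → ℝ)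
    (Eh : ℝ → Set E) (Y : ℝ × ℝ → E → ℕ → Ω → E)
    (ht τt q qt γ₂ κ L₃ L₄ : ℝ) (ρD : ℝ × ℝ → ℝ → ℝ)
    (x : E) (xh : ℝ → E) (α₁ α₂ L₅ : ℝ)
    (hA1 : Assumption1 ℙ ℱ X r rt γ₁ β L₁ L₂ ρ)
    (hA2 : Assumption2 ℙ ℱ Eh Y ht τt q qt γ₂ κ L₃ L₄ ρD)
    (hA3 : Assumption3 ℙ X Y Eh ht τt rt qt x xh α₁ α₂ L₅)
    (μ : Measure E) (hμ : IsInvMeasure ℙ X μ)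
    (μD : ℝ × ℝ → Measure E)
    (hμD : ∀ Δ, Adm ht τt Δ → IsInvMeasureD ℙ Y (Eh Δ.1) Δ (μD Δ))
    (p γ : ℝ) (hp : p ∈ Set.Icc (1 : ℝ) (min q r)) (hγ : γ ∈ Set.Ioc (0 : ℝ) 1) :
    ∃ K > (0 : ℝ), ∀ Δ, Adm ht τt Δ → ∀ f : E → ℝ, MemC Set.univ p γ f →
      |(∫ u, f u ∂μ) - ∫ u, f u ∂(μD Δ)| ≤
        K * CNorm Set.univ p γ f * (Δ.1 ^ α₁ + Δ.2 ^ α₂) ^ γ :=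
  statement11_general ℙ ℱ X r rt γ₁ β L₁ L₂ ρ Eh Y ht τt q qt γ₂ κ L₃ L₄ ρD x xh α₁ α₂ L₅ hA1 hA2
    hA3 μ hμ μD hμD p γ hp hγ
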